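/- Let m and d be positive integers and let σ : {0,1}^m → Matrix (Fin d) (Fin d) ℂ assign to every m-bit string x a density matrix σ_x (positive semidefinite with trace 1). Let σ̄ = 2^{-m} · ∑_x σ_x be the average encoded state, and let I = S(σ̄) − 2^{-m} · ∑_x S(σ_x) be the mutual information between a uniformly random input X and its encoding. Then 2^{-m} · ∑_{x ∈ {0,1}^m} ‖σ̄ − σ_x‖₁ ≤ 2·√I. (Average encoding theorem.) -/

import Mathlib

open Matrix BigOperators Kronecker
open scoped ComplexOrder

noncomputable section
open Classical

/-- The positive semidefinite square root of a matrix (junk value `0` if not PSD). -/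
def msqrt {d : Type*} [Fintype d] [DecidableEq d] (A : Matrix d d ℂ) : Matrix d d ℂ :=
  if h : A.PosSemidef then
    (h.1.eigenvectorUnitary : Matrix d d ℂ) * diagonal ((↑) ∘ (√·) ∘ h.1.eigenvalues) *
      (star h.1.eigenvectorUnitary : Matrix d d ℂ)
  else 0

/-- The trace norm `Tr √(AᴴA)` of a complex matrix. -/
def traceNorm {d : Type*} [Fintype d] [DecidableEq d] (A : Matrix d d ℂ) : ℝ :=
  ((msqrt (Aᴴ * A)).trace).re

/-- `ρ` is a density matrix: positive semidefinite with trace `1`. -/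
def IsDensityMatrix {d : Type*} [Fintype d] [DecidableEq d] (ρ : Matrix d d ℂ) : Prop :=
  ρ.PosSemidef ∧ ρ.trace = 1

/-- Von Neumann entropy, base 2 (junk value `0` if not Hermitian). -/
def vnEntropy {d : Type*} [Fintype d] [DecidableEq d] (ρ : Matrix d d ℂ) : ℝ :=
  if h : ρ.IsHermitian then -∑ i, (h.eigenvalues i) * Real.logb 2 (h.eigenvalues i) else 0

/-- The binary entropy function, base 2. -/
def binEntropy (p : ℝ) : ℝ := -p * Real.logb 2 p - (1 - p) * Real.logb 2 (1 - p)

/-- Fidelity of two matrices: `(Tr √(√ρ₁ ρ₂ √ρ₁))²`. -/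
def fidelity {d : Type*} [Fintype d] [DecidableEq d] (ρ₁ ρ₂ : Matrix d d ℂ) : ℝ :=
  (((msqrt (msqrt ρ₁ * ρ₂ * msqrt ρ₁)).trace).re) ^ 2

/-- Partial trace over the second tensor factor. -/
def ptraceSnd {m k : ℕ} (ρ : Matrix (Fin m × Fin k) (Fin m × Fin k) ℂ) :
    Matrix (Fin m) (Fin m) ℂ :=
  Matrix.of fun i j => ∑ l : Fin k, ρ (i, l) (j, l)

end

/-!
Write `A = √σ` and `B = √ρ` for density matrices `ρ`, `σ`. Since
`2 (σ - ρ) = (A - B)(A + B) + (A + B)(A - B)`, pairing `σ - ρ` with its sign unitary and applying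
Cauchy–Schwarz to both terms gives `‖σ - ρ‖₁² ≤ Tr (A - B)² · Tr (A + B)² = 4 (1 - G²)`, where
`G = Tr √σ √ρ`. The Nussbaum–Szkoła distributions `P`, `Q` of `(ρ, σ)` satisfy `G = ∑ √(P Q)` and
`ln 2 · D(ρ‖σ) = KL(P‖Q)`, so Jensen's inequality for `exp` gives `G ≥ exp (-ln 2 · D(ρ‖σ) / 2)`,
whence the weak Pinsker inequality `‖σ - ρ‖₁² ≤ 4 ln 2 · D(ρ‖σ)`.

Take `ρ = σ_x` and `σ = σ̄`; the support condition holds because `σ_x ≤ 2^m σ̄`. By linearity of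
`ρ ↦ Tr ρ log σ̄`, the relative entropies `D(σ_x‖σ̄)` sum to `2^m I`, and Cauchy–Schwarz over `x`
together with `ln 2 ≤ 1` gives the bound.
-/

open scoped MatrixOrder
open Unitary (conjStarAlgAut)

section

variable {ι : Type*} [Fintype ι]

lemma exp_neg_half_sum_mul_log_sub_le_sum_sqrt_mul {P Q : ι → ℝ}
    (hP : 0 ≤ P) (hP1 : ∑ z, P z = 1) (hQ : 0 ≤ Q) (hPQ : ∀ z, Q z = 0 → P z = 0) :
    Real.exp (-(∑ z, P z * (Real.log (P z) - Real.log (Q z))) / 2) ≤ ∑ z, √(P z) * √(Q z) := by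
  have hJ := convexOn_exp.map_sum_le (t := Finset.univ) (w := P)
    (p := fun z => (Real.log (Q z) - Real.log (P z)) / 2) (fun z _ => hP z) hP1
    (fun z _ => Set.mem_univ _)
  have exp_half_log {x : ℝ} (hx : 0 < x) : Real.exp (Real.log x / 2) = √x := by
    rw [Real.sqrt_eq_rpow, Real.rpow_def_of_pos hx]
    ring_nf
  calc Real.exp (-(∑ z, P z * (Real.log (P z) - Real.log (Q z))) / 2)
      = Real.exp (∑ z, P z • ((Real.log (Q z) - Real.log (P z)) / 2)) := by
        rw [neg_div, Finset.sum_div, ← Finset.sum_neg_distrib]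
        exact congrArg _ (Finset.sum_congr rfl fun z _ => by rw [smul_eq_mul]; ring)
    _ ≤ ∑ z, P z • Real.exp ((Real.log (Q z) - Real.log (P z)) / 2) := hJ
    _ = ∑ z, √(P z) * √(Q z) := by
        refine Finset.sum_congr rfl fun z _ => ?_
        rw [smul_eq_mul]
        rcases (hP z).eq_or_lt' with hPz | hPz
        · simp [hPz]
        have hQz : 0 < Q z := (hQ z).lt_of_ne' fun h => hPz.ne' (hPQ z h)
        rw [sub_div, Real.exp_sub, exp_half_log hQz, exp_half_log hPz, mul_div, mul_comm (P z),
          mul_div_assoc, Real.div_sqrt, mul_comm]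

lemma inv_card_mul_sum_le_sqrt {f g : ι → ℝ} (hfg : ∀ x, f x ^ 2 ≤ g x) :
    (Fintype.card ι : ℝ)⁻¹ * ∑ x, f x ≤ √((Fintype.card ι : ℝ)⁻¹ * ∑ x, g x) := by
  refine (le_abs_self _).trans (Real.abs_le_sqrt ?_)
  rw [inv_mul_eq_div, inv_mul_eq_div]
  calc ((∑ x, f x) / Fintype.card ι) ^ 2 ≤ (∑ x, f x ^ 2) / Fintype.card ι :=
        sum_div_card_sq_le_sum_sq_div_card
    _ ≤ (∑ x, g x) / Fintype.card ι := by gcongr with x; exact hfg x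

end

section

variable {n : Type*} [Fintype n]

lemma re_trace_conjTranspose_mul_self (M : Matrix n n ℂ) :
    ((Mᴴ * M).trace).re = ∑ p : n × n, ‖M p.1 p.2‖ ^ 2 := by
  simp only [trace, diag_apply, mul_apply, conjTranspose_apply, Complex.re_sum,
    Fintype.sum_prod_type]
  rw [Finset.sum_comm]
  refine Finset.sum_congr rfl fun i _ => Finset.sum_congr rfl fun j _ => ?_
  rw [← Complex.normSq_eq_norm_sq, Complex.normSq_apply]
  simp only [Complex.star_def, Complex.mul_re, Complex.conj_re, Complex.conj_im]
  ring

lemma re_trace_conjTranspose_mul_self_nonneg (M : Matrix n n ℂ) : 0 ≤ ((Mᴴ * M).trace).re := by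
  rw [re_trace_conjTranspose_mul_self]
  positivity

lemma re_trace_mul_le (M N : Matrix n n ℂ) :
    ((M * N).trace).re ≤ √((Mᴴ * M).trace).re * √((Nᴴ * N).trace).re := by
  have hexpand : (M * N).trace = ∑ p : n × n, M p.1 p.2 * N p.2 p.1 := by
    simp [trace, mul_apply, Fintype.sum_prod_type]
  calc ((M * N).trace).re ≤ ∑ p : n × n, ‖M p.1 p.2‖ * ‖N p.2 p.1‖ := by
        rw [hexpand]
        refine (Complex.re_le_norm _).trans ((norm_sum_le _ _).trans_eq ?_)
        simp only [norm_mul]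
    _ ≤ √(∑ p : n × n, ‖M p.1 p.2‖ ^ 2) * √(∑ p : n × n, ‖N p.2 p.1‖ ^ 2) :=
        Real.sum_mul_le_sqrt_mul_sqrt _ _ _
    _ = √((Mᴴ * M).trace).re * √((Nᴴ * N).trace).re := by
        rw [re_trace_conjTranspose_mul_self, re_trace_conjTranspose_mul_self]
        congr 2
        exact Fintype.sum_equiv (Equiv.prodComm n n) _ _ fun p => rfl

variable [DecidableEq n]

lemma trace_conjStarAlgAut (u : unitary (Matrix n n ℂ)) (A : Matrix n n ℂ) :
    (conjStarAlgAut ℂ _ u A).trace = A.trace := by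
  rw [Unitary.conjStarAlgAut_apply, trace_mul_cycle, Unitary.coe_star_mul_self, one_mul]

lemma sum_norm_sq_apply_eq_one (w : unitary (Matrix n n ℂ)) (i : n) :
    ∑ j, ‖(w : Matrix n n ℂ) j i‖ ^ 2 = 1 := by
  have h := congrFun (congrFun (Unitary.coe_star_mul_self w) i) i
  simp only [mul_apply, star_apply, one_apply_eq, Complex.star_def, Complex.conj_mul'] at h
  exact_mod_cast h

lemma conjStarAlgAut_diagonal_apply_self (w : unitary (Matrix n n ℂ)) (b : n → ℝ) (j : n) :
    conjStarAlgAut ℂ _ w (diagonal (RCLike.ofReal ∘ b)) j j =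
      ((∑ i, b i * ‖(w : Matrix n n ℂ) j i‖ ^ 2 : ℝ) : ℂ) := by
  rw [Unitary.conjStarAlgAut_apply, mul_apply]
  push_cast
  refine Finset.sum_congr rfl fun i _ => ?_
  rw [mul_diagonal, star_apply, ← Complex.mul_conj', Complex.star_def]
  simp only [Function.comp_apply, RCLike.ofReal_eq_complex_ofReal]
  ring

lemma re_trace_conjStarAlgAut_diagonal_mul (u v : unitary (Matrix n n ℂ)) (a b : n → ℝ) :
    ((conjStarAlgAut ℂ _ v (diagonal (RCLike.ofReal ∘ a)) *
        conjStarAlgAut ℂ _ u (diagonal (RCLike.ofReal ∘ b))).trace).re =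
      ∑ j, ∑ i, a j * b i * ‖((star v * u : unitary _) : Matrix n n ℂ) j i‖ ^ 2 := by
  have hu : u = v * (star v * u) := by rw [← mul_assoc, Unitary.mul_star_self, one_mul]
  conv_lhs => rw [hu, Unitary.conjStarAlgAut_mul_apply, ← map_mul, trace_conjStarAlgAut]
  simp only [trace, diag_apply, diagonal_mul, conjStarAlgAut_diagonal_apply_self]
  simp only [Function.comp_apply, Complex.re_sum, RCLike.ofReal_eq_complex_ofReal,
    ← Complex.ofReal_mul, Complex.ofReal_re, Finset.mul_sum, mul_assoc]

lemma msqrt_eq_sqrt {A : Matrix n n ℂ} (hA : A.PosSemidef) : msqrt A = CFC.sqrt A := by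
  rw [CFC.sqrt_eq_cfc, cfc_nnreal_eq_real _ A hA.nonneg, hA.1.cfc_eq, IsHermitian.cfc,
    msqrt, dif_pos hA]
  congr 3
  funext i
  simp only [Function.comp_apply, Real.coe_sqrt, Real.coe_toNNReal _ (hA.eigenvalues_nonneg i)]
  rfl

lemma msqrt_mul_msqrt {A : Matrix n n ℂ} (hA : A.PosSemidef) : msqrt A * msqrt A = A := by
  rw [msqrt_eq_sqrt hA]
  exact CFC.sqrt_mul_sqrt_self A hA.nonneg

lemma isHermitian_msqrt (A : Matrix n n ℂ) : (msqrt A).IsHermitian := by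
  by_cases hA : A.PosSemidef
  · rw [msqrt_eq_sqrt hA]
    exact (CFC.sqrt_nonneg A).isSelfAdjoint
  · rw [msqrt, dif_neg hA]
    exact isHermitian_zero

lemma msqrt_conjStarAlgAut_diagonal (u : unitary (Matrix n n ℂ)) {f : n → ℝ} (hf : 0 ≤ f) :
    msqrt (conjStarAlgAut ℂ _ u (diagonal (RCLike.ofReal ∘ f))) =
      conjStarAlgAut ℂ _ u (diagonal (RCLike.ofReal ∘ (√·) ∘ f)) := by
  have diagonal_nonneg {g : n → ℝ} (hg : 0 ≤ g) : 0 ≤ diagonal (RCLike.ofReal ∘ g : n → ℂ) :=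
    nonneg_iff_posSemidef.mpr <| posSemidef_diagonal_iff.mpr fun i => by
      simpa using Complex.zero_le_real.mpr (hg i)
  rw [msqrt_eq_sqrt (nonneg_iff_posSemidef.mp (map_nonneg _ (diagonal_nonneg hf)))]
  refine CFC.sqrt_unique ?_ (map_nonneg _ (diagonal_nonneg fun i => Real.sqrt_nonneg (f i)))
  rw [← map_mul, diagonal_mul_diagonal]
  congr 2
  funext i
  simp [← Complex.ofReal_mul, Real.mul_self_sqrt (hf i)]

lemma msqrt_eq_cfc {A : Matrix n n ℂ} (hA : A.PosSemidef) : msqrt A = cfc Real.sqrt A := by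
  rw [hA.1.cfc_eq, IsHermitian.cfc]
  nth_rw 1 [hA.1.spectral_theorem]
  exact msqrt_conjStarAlgAut_diagonal _ hA.eigenvalues_nonneg

lemma Matrix.IsHermitian.traceNorm_eq_sum_abs_eigenvalues {A : Matrix n n ℂ} (hA : A.IsHermitian) :
    traceNorm A = ∑ i, |hA.eigenvalues i| := by
  have hsq : Aᴴ * A = conjStarAlgAut ℂ _ hA.eigenvectorUnitary
      (diagonal (RCLike.ofReal ∘ fun i => hA.eigenvalues i ^ 2)) := by
    conv_lhs => rw [hA.eq, hA.spectral_theorem]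
    rw [← map_mul, diagonal_mul_diagonal]
    congr 2
    funext i
    simp [sq]
  rw [traceNorm, hsq, msqrt_conjStarAlgAut_diagonal _ fun i => sq_nonneg _, trace_conjStarAlgAut,
    trace_diagonal, Complex.re_sum]
  simp [Real.sqrt_sq_eq_abs]

lemma traceNorm_nonneg (A : Matrix n n ℂ) : 0 ≤ traceNorm A := by
  have hA := posSemidef_conjTranspose_mul_self A
  rw [traceNorm, msqrt_eq_sqrt hA]
  exact Complex.nonneg_iff.mp (nonneg_iff_posSemidef.mp (CFC.sqrt_nonneg _)).trace_nonneg |>.1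

lemma Matrix.IsHermitian.exists_unitary_re_trace_mul_eq_traceNorm {A : Matrix n n ℂ}
    (hA : A.IsHermitian) :
    ∃ S : unitary (Matrix n n ℂ), (((S : Matrix n n ℂ) * A).trace).re = traceNorm A := by
  set u := hA.eigenvectorUnitary
  let sign : n → ℝ := fun i => if 0 ≤ hA.eigenvalues i then 1 else -1
  have hsign :
      star (diagonal (RCLike.ofReal ∘ sign : n → ℂ)) * diagonal (RCLike.ofReal ∘ sign) = 1 := by
    rw [star_eq_conjTranspose, diagonal_conjTranspose, diagonal_mul_diagonal, ← diagonal_one]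
    congr 1
    funext i
    by_cases h : 0 ≤ hA.eigenvalues i <;> simp [sign, h]
  let D : unitary (Matrix n n ℂ) := ⟨_, mem_unitaryGroup_iff'.mpr hsign⟩
  refine ⟨u * D * star u, ?_⟩
  conv_lhs => rw [hA.spectral_theorem]
  rw [show ((u * D * star u : unitary _) : Matrix n n ℂ) = conjStarAlgAut ℂ _ u D from rfl,
    ← map_mul, diagonal_mul_diagonal, trace_conjStarAlgAut, trace_diagonal, Complex.re_sum,
    hA.traceNorm_eq_sum_abs_eigenvalues]
  refine Finset.sum_congr rfl fun i _ => ?_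
  by_cases h : 0 ≤ hA.eigenvalues i
  · simp [sign, h, abs_of_nonneg h]
  · simp [sign, h, abs_of_neg (not_le.mp h)]

lemma traceNorm_sq_le_of_mul_add_mul_eq {A X Y : Matrix n n ℂ} (hA : A.IsHermitian)
    (hXY : X * Y + Y * X = A + A) :
    traceNorm A ^ 2 ≤ ((Xᴴ * X).trace).re * ((Yᴴ * Y).trace).re := by
  obtain ⟨S, hS⟩ := hA.exists_unitary_re_trace_mul_eq_traceNorm
  have hnorm (Z : Matrix n n ℂ) : ((S : Matrix n n ℂ) * Z)ᴴ * (S * Z) = Zᴴ * Z := by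
    rw [conjTranspose_mul, mul_assoc, ← mul_assoc (S : Matrix n n ℂ)ᴴ,
      ← star_eq_conjTranspose (S : Matrix n n ℂ), Unitary.coe_star_mul_self, one_mul]
  have hsplit : 2 * traceNorm A =
      (((S * X : Matrix n n ℂ) * Y).trace).re + (((S * Y : Matrix n n ℂ) * X).trace).re := by
    rw [← hS, mul_assoc, mul_assoc, ← Complex.add_re, ← trace_add, ← mul_add, hXY, mul_add,
      trace_add, Complex.add_re]
    ring
  have h1 := re_trace_mul_le ((S : Matrix n n ℂ) * X) Y
  have h2 := re_trace_mul_le ((S : Matrix n n ℂ) * Y) X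
  rw [hnorm] at h1 h2
  calc traceNorm A ^ 2 ≤ (√((Xᴴ * X).trace).re * √((Yᴴ * Y).trace).re) ^ 2 :=
        pow_le_pow_left₀ (traceNorm_nonneg A) (by linarith) 2
    _ = ((Xᴴ * X).trace).re * ((Yᴴ * Y).trace).re := by
        rw [mul_pow, Real.sq_sqrt (re_trace_conjTranspose_mul_self_nonneg X),
          Real.sq_sqrt (re_trace_conjTranspose_mul_self_nonneg Y)]

noncomputable def affinity (ρ σ : Matrix n n ℂ) : ℝ := ((msqrt ρ * msqrt σ).trace).re

lemma traceNorm_sub_sq_le_four_mul_one_sub_affinity_sq {ρ σ : Matrix n n ℂ}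
    (hρ : IsDensityMatrix ρ) (hσ : IsDensityMatrix σ) :
    traceNorm (σ - ρ) ^ 2 ≤ 4 * (1 - affinity σ ρ ^ 2) := by
  set A := msqrt σ
  set B := msqrt ρ
  have hA : A * A = σ := msqrt_mul_msqrt hσ.1
  have hB : B * B = ρ := msqrt_mul_msqrt hρ.1
  have hAH : Aᴴ = A := isHermitian_msqrt σ
  have hBH : Bᴴ = B := isHermitian_msqrt ρ
  have hBA : (B * A).trace = (A * B).trace := trace_mul_comm B A
  have hanti : (A - B) * (A + B) + (A + B) * (A - B) = (σ - ρ) + (σ - ρ) := by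
    rw [← hA, ← hB]
    noncomm_ring
  have hminus : (((A - B)ᴴ * (A - B)).trace).re = 2 - 2 * affinity σ ρ := by
    rw [conjTranspose_sub, hAH, hBH,
      show (A - B) * (A - B) = A * A + B * B - (A * B + B * A) by noncomm_ring,
      hA, hB, trace_sub, trace_add, trace_add, hσ.2, hρ.2, hBA]
    simp only [affinity, A, B, Complex.add_re, Complex.sub_re, Complex.one_re]
    ring
  have hplus : (((A + B)ᴴ * (A + B)).trace).re = 2 + 2 * affinity σ ρ := by
    rw [conjTranspose_add, hAH, hBH,
      show (A + B) * (A + B) = A * A + B * B + (A * B + B * A) by noncomm_ring,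
      hA, hB, trace_add, trace_add, trace_add, hσ.2, hρ.2, hBA]
    simp only [affinity, A, B, Complex.add_re, Complex.one_re]
    ring
  have h := traceNorm_sq_le_of_mul_add_mul_eq (hσ.1.1.sub hρ.1.1) hanti
  rw [hminus, hplus] at h
  linarith

/-- `D(ρ‖σ) = Tr ρ log₂ ρ - Tr ρ log₂ σ`. As `Real.logb 2 0 = 0`, this is the relative entropy only
when the support of `ρ` lies in that of `σ`, as ensured below by a hypothesis `ρ ≤ t • σ`. -/
noncomputable def relEntropy (ρ σ : Matrix n n ℂ) : ℝ :=
  -vnEntropy ρ - ((ρ * cfc (Real.logb 2) σ).trace).re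

lemma Matrix.IsHermitian.vnEntropy_eq_neg_re_trace_mul_cfc {A : Matrix n n ℂ}
    (hA : A.IsHermitian) : vnEntropy A = -((A * cfc (Real.logb 2) A).trace).re := by
  have hmul : A * cfc (Real.logb 2) A = conjStarAlgAut ℂ _ hA.eigenvectorUnitary
      (diagonal (RCLike.ofReal ∘ fun i => hA.eigenvalues i * Real.logb 2 (hA.eigenvalues i))) := by
    rw [hA.cfc_eq, IsHermitian.cfc]
    nth_rw 1 [hA.spectral_theorem]
    rw [← map_mul, diagonal_mul_diagonal]
    congr 2
    funext i
    simp
  rw [hmul, trace_conjStarAlgAut, trace_diagonal, Complex.re_sum, vnEntropy, dif_pos hA]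
  simp

variable {ρ σ : Matrix n n ℂ}

/-- For `z = (j, i)`, the squared overlap `‖⟪v j, u i⟫‖²` of the eigenvector `v j` of `σ` with
the eigenvector `u i` of `ρ`. -/
noncomputable def eigenOverlap (hρ : ρ.IsHermitian) (hσ : σ.IsHermitian) (z : n × n) : ℝ :=
  ‖((star hσ.eigenvectorUnitary * hρ.eigenvectorUnitary : unitary _) : Matrix n n ℂ) z.1 z.2‖ ^ 2

noncomputable def nussbaumSzkolaP (hρ : ρ.IsHermitian) (hσ : σ.IsHermitian) (z : n × n) : ℝ :=
  hρ.eigenvalues z.2 * eigenOverlap hρ hσ z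

noncomputable def nussbaumSzkolaQ (hρ : ρ.IsHermitian) (hσ : σ.IsHermitian) (z : n × n) : ℝ :=
  hσ.eigenvalues z.1 * eigenOverlap hρ hσ z

lemma eigenOverlap_nonneg (hρ : ρ.IsHermitian) (hσ : σ.IsHermitian) (z : n × n) :
    0 ≤ eigenOverlap hρ hσ z :=
  sq_nonneg _

lemma sum_eigenOverlap (hρ : ρ.IsHermitian) (hσ : σ.IsHermitian) (i : n) :
    ∑ j, eigenOverlap hρ hσ (j, i) = 1 :=
  sum_norm_sq_apply_eq_one _ i

lemma re_trace_cfc_mul_cfc (hρ : ρ.IsHermitian) (hσ : σ.IsHermitian) (f g : ℝ → ℝ) :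
    ((cfc f σ * cfc g ρ).trace).re =
      ∑ z, f (hσ.eigenvalues z.1) * g (hρ.eigenvalues z.2) * eigenOverlap hρ hσ z := by
  rw [hσ.cfc_eq, hρ.cfc_eq, IsHermitian.cfc, IsHermitian.cfc,
    re_trace_conjStarAlgAut_diagonal_mul, Fintype.sum_prod_type]
  rfl

lemma sum_nussbaumSzkolaP (hρ : IsDensityMatrix ρ) (hσ : σ.IsHermitian) :
    ∑ z, nussbaumSzkolaP hρ.1.1 hσ z = 1 := by
  have htrace : ((∑ i, hρ.1.1.eigenvalues i : ℝ) : ℂ) = 1 := by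
    push_cast
    exact hρ.1.1.trace_eq_sum_eigenvalues.symm.trans hρ.2
  rw [Fintype.sum_prod_type, Finset.sum_comm]
  simp only [nussbaumSzkolaP, ← Finset.mul_sum, sum_eigenOverlap, mul_one]
  exact_mod_cast htrace

lemma nussbaumSzkolaP_eq_zero_of_le_smul (hρ : ρ.PosSemidef) (hσ : σ.IsHermitian) {t : ℝ}
    (hρσ : ρ ≤ t • σ) (z : n × n) (hz : nussbaumSzkolaQ hρ.1 hσ z = 0) :
    nussbaumSzkolaP hρ.1 hσ z = 0 := by
  obtain ⟨j, i⟩ := z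
  rcases mul_eq_zero.mp hz with hj | hji
  swap
  · rw [nussbaumSzkolaP, hji, mul_zero]
  have hmono := OrderHomClass.mono (conjStarAlgAut ℂ _ (star hσ.eigenvectorUnitary)) hρσ
  nth_rw 1 [hρ.1.spectral_theorem] at hmono
  rw [← Unitary.conjStarAlgAut_mul_apply, ← Complex.coe_smul, map_smul,
    hσ.conjStarAlgAut_star_eigenvectorUnitary] at hmono
  have hdiag := (le_iff.mp hmono).diag_nonneg (i := j)
  rw [Matrix.sub_apply, Matrix.smul_apply, diagonal_apply_eq, conjStarAlgAut_diagonal_apply_self,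
    Function.comp_apply, hj, RCLike.ofReal_zero, smul_zero, zero_sub, Left.nonneg_neg_iff]
    at hdiag
  have hnonneg (k : n) (_ : k ∈ Finset.univ) : 0 ≤ nussbaumSzkolaP hρ.1 hσ (j, k) :=
    mul_nonneg (hρ.eigenvalues_nonneg k) (eigenOverlap_nonneg _ _ _)
  refine (Finset.sum_eq_zero_iff_of_nonneg hnonneg).mp (le_antisymm ?_ (Finset.sum_nonneg hnonneg))
    i (Finset.mem_univ i)
  exact_mod_cast hdiag

lemma affinity_eq_sum_sqrt_mul_sqrt_nussbaumSzkola (hρ : ρ.PosSemidef) (hσ : σ.PosSemidef) :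
    affinity σ ρ = ∑ z, √(nussbaumSzkolaP hρ.1 hσ.1 z) * √(nussbaumSzkolaQ hρ.1 hσ.1 z) := by
  rw [affinity, msqrt_eq_cfc hσ, msqrt_eq_cfc hρ, re_trace_cfc_mul_cfc hρ.1 hσ.1]
  refine Finset.sum_congr rfl fun z _ => ?_
  rw [nussbaumSzkolaP, nussbaumSzkolaQ, Real.sqrt_mul (hρ.eigenvalues_nonneg _),
    Real.sqrt_mul (hσ.eigenvalues_nonneg _), mul_mul_mul_comm,
    Real.mul_self_sqrt (eigenOverlap_nonneg _ _ _)]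
  ring

lemma log_two_mul_relEntropy_eq (hρ : ρ.IsHermitian) (hσ : σ.IsHermitian)
    (hPQ : ∀ z, nussbaumSzkolaQ hρ hσ z = 0 → nussbaumSzkolaP hρ hσ z = 0) :
    Real.log 2 * relEntropy ρ σ = ∑ z, nussbaumSzkolaP hρ hσ z *
      (Real.log (nussbaumSzkolaP hρ hσ z) - Real.log (nussbaumSzkolaQ hρ hσ z)) := by
  set p := hρ.eigenvalues
  set q := hσ.eigenvalues
  have hentropy : vnEntropy ρ = -∑ z, nussbaumSzkolaP hρ hσ z * Real.logb 2 (p z.2) := by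
    rw [vnEntropy, dif_pos hρ, Fintype.sum_prod_type, Finset.sum_comm]
    congr 1
    refine Finset.sum_congr rfl fun i _ => ?_
    simp only [nussbaumSzkolaP, mul_assoc]
    rw [← Finset.mul_sum, ← Finset.sum_mul, sum_eigenOverlap, one_mul]
  have hcross : ((ρ * cfc (Real.logb 2) σ).trace).re =
      ∑ z, nussbaumSzkolaP hρ hσ z * Real.logb 2 (q z.1) := by
    conv_lhs => rw [trace_mul_comm, ← cfc_id' ℝ ρ]
    rw [re_trace_cfc_mul_cfc hρ hσ]
    exact Finset.sum_congr rfl fun z _ => by rw [nussbaumSzkolaP]; ring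
  rw [relEntropy, hentropy, hcross, neg_neg, ← Finset.sum_sub_distrib, Finset.mul_sum]
  refine Finset.sum_congr rfl fun z _ => ?_
  by_cases hP : nussbaumSzkolaP hρ hσ z = 0
  · simp [hP]
  have hQ : nussbaumSzkolaQ hρ hσ z ≠ 0 := mt (hPQ z) hP
  obtain ⟨hp, hc⟩ := mul_ne_zero_iff.mp hP
  rw [nussbaumSzkolaP, nussbaumSzkolaQ] at *
  rw [Real.log_mul hp hc, Real.log_mul (left_ne_zero_of_mul hQ) hc, Real.logb, Real.logb]
  field_simp
  ring

lemma exp_neg_mul_relEntropy_le_affinity (hρ : IsDensityMatrix ρ) (hσ : σ.PosSemidef) {t : ℝ}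
    (hρσ : ρ ≤ t • σ) : Real.exp (-(Real.log 2 / 2) * relEntropy ρ σ) ≤ affinity σ ρ := by
  have hPQ := nussbaumSzkolaP_eq_zero_of_le_smul hρ.1 hσ.1 hρσ
  calc Real.exp (-(Real.log 2 / 2) * relEntropy ρ σ)
      = Real.exp (-(Real.log 2 * relEntropy ρ σ) / 2) := by ring_nf
    _ ≤ _ := by
        rw [log_two_mul_relEntropy_eq hρ.1.1 hσ.1 hPQ]
        exact exp_neg_half_sum_mul_log_sub_le_sum_sqrt_mul
          (fun z => mul_nonneg (hρ.1.eigenvalues_nonneg _) (eigenOverlap_nonneg _ _ _))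
          (sum_nussbaumSzkolaP hρ hσ.1)
          (fun z => mul_nonneg (hσ.eigenvalues_nonneg _) (eigenOverlap_nonneg _ _ _)) hPQ
    _ = affinity σ ρ := (affinity_eq_sum_sqrt_mul_sqrt_nussbaumSzkola hρ.1 hσ).symm

lemma traceNorm_sub_sq_le_relEntropy (hρ : IsDensityMatrix ρ) (hσ : IsDensityMatrix σ) {t : ℝ}
    (hρσ : ρ ≤ t • σ) : traceNorm (σ - ρ) ^ 2 ≤ 4 * Real.log 2 * relEntropy ρ σ := by
  have haff := exp_neg_mul_relEntropy_le_affinity hρ hσ.1 hρσ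
  have hsq : Real.exp (-Real.log 2 * relEntropy ρ σ) ≤ affinity σ ρ ^ 2 := by
    calc Real.exp (-Real.log 2 * relEntropy ρ σ)
        = Real.exp (-(Real.log 2 / 2) * relEntropy ρ σ) ^ 2 := by
          rw [← Real.exp_nat_mul]; ring_nf
      _ ≤ affinity σ ρ ^ 2 := pow_le_pow_left₀ (Real.exp_pos _).le haff 2
  have hexp := Real.add_one_le_exp (-Real.log 2 * relEntropy ρ σ)
  have := traceNorm_sub_sq_le_four_mul_one_sub_affinity_sq hρ hσ
  linarith

lemma relEntropy_nonneg (hρ : IsDensityMatrix ρ) (hσ : IsDensityMatrix σ) {t : ℝ}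
    (hρσ : ρ ≤ t • σ) : 0 ≤ relEntropy ρ σ := by
  have h := (sq_nonneg _).trans (traceNorm_sub_sq_le_relEntropy hρ hσ hρσ)
  have hlog : 0 < 4 * Real.log 2 := by positivity
  exact nonneg_of_mul_nonneg_right h hlog

end

section

variable {ι : Type*} [Fintype ι] {n : Type*}

lemma le_card_smul_average {ρ : ι → Matrix n n ℂ} (hρ : ∀ x, (ρ x).PosSemidef) (x : ι) :
    ρ x ≤ (Fintype.card ι : ℝ) • ((Fintype.card ι : ℂ)⁻¹ • ∑ y, ρ y) := by
  have : Nonempty ι := ⟨x⟩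
  have hcard : (Fintype.card ι : ℂ) ≠ 0 := Nat.cast_ne_zero.mpr Fintype.card_ne_zero
  rw [← Complex.coe_smul, Complex.ofReal_natCast, smul_smul, mul_inv_cancel₀ hcard, one_smul]
  exact Finset.single_le_sum (fun y _ => (hρ y).nonneg) (Finset.mem_univ x)

variable [Fintype n] [DecidableEq n]

lemma IsDensityMatrix.average [Nonempty ι] {ρ : ι → Matrix n n ℂ}
    (hρ : ∀ x, IsDensityMatrix (ρ x)) :
    IsDensityMatrix ((Fintype.card ι : ℂ)⁻¹ • ∑ x, ρ x) := by
  refine ⟨(posSemidef_sum _ fun x _ => (hρ x).1).smul (by positivity), ?_⟩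
  rw [trace_smul, trace_sum, Finset.sum_congr rfl fun x _ => (hρ x).2, Finset.sum_const,
    Finset.card_univ, nsmul_one, smul_eq_mul, inv_mul_cancel₀ (by simp)]

lemma sum_relEntropy_average [Nonempty ι] {ρ : ι → Matrix n n ℂ}
    (hρ : ((Fintype.card ι : ℂ)⁻¹ • ∑ x, ρ x).IsHermitian) :
    ∑ x, relEntropy (ρ x) ((Fintype.card ι : ℂ)⁻¹ • ∑ y, ρ y) =
      Fintype.card ι * (vnEntropy ((Fintype.card ι : ℂ)⁻¹ • ∑ y, ρ y) -
        (Fintype.card ι : ℝ)⁻¹ * ∑ x, vnEntropy (ρ x)) := by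
  set ρbar := (Fintype.card ι : ℂ)⁻¹ • ∑ y, ρ y
  have hcard : (Fintype.card ι : ℂ) ≠ 0 := Nat.cast_ne_zero.mpr Fintype.card_ne_zero
  have hsum : ∑ x, ρ x = (Fintype.card ι : ℂ) • ρbar := by
    rw [smul_smul, mul_inv_cancel₀ hcard, one_smul]
  have hcross : ∑ x, ((ρ x * cfc (Real.logb 2) ρbar).trace).re =
      Fintype.card ι * ((ρbar * cfc (Real.logb 2) ρbar).trace).re := by
    rw [← Complex.re_sum, ← trace_sum, ← Finset.sum_mul, hsum, smul_mul_assoc, trace_smul,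
      smul_eq_mul, ← Complex.ofReal_natCast, Complex.re_ofReal_mul]
  simp only [relEntropy, Finset.sum_sub_distrib, Finset.sum_neg_distrib, hcross,
    hρ.vnEntropy_eq_neg_re_trace_mul_cfc]
  field_simp
  ring

end

theorem average_encoding_general (m d : ℕ)
    (σ : (Fin m → Bool) → Matrix (Fin d) (Fin d) ℂ)
    (hσ : ∀ x, IsDensityMatrix (σ x)) :
    ((2 : ℝ) ^ m)⁻¹ * ∑ x : Fin m → Bool,
        traceNorm ((((2 : ℂ) ^ m)⁻¹ • ∑ y : Fin m → Bool, σ y) - σ x) ≤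
      2 * Real.sqrt
        (vnEntropy (((2 : ℂ) ^ m)⁻¹ • ∑ y : Fin m → Bool, σ y) -
          ((2 : ℝ) ^ m)⁻¹ * ∑ x : Fin m → Bool, vnEntropy (σ x)) := by
  have hcard : Fintype.card (Fin m → Bool) = 2 ^ m := by simp
  set σbar := ((2 : ℂ) ^ m)⁻¹ • ∑ y, σ y
  set I := vnEntropy σbar - ((2 : ℝ) ^ m)⁻¹ * ∑ x, vnEntropy (σ x)
  have hbar : IsDensityMatrix σbar := by simpa [hcard] using IsDensityMatrix.average hσ
  have hle (x : Fin m → Bool) : σ x ≤ ((2 : ℝ) ^ m) • σbar := by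
    simpa [hcard] using le_card_smul_average (fun y => (hσ y).1) x
  have hsum : ∑ x, relEntropy (σ x) σbar = 2 ^ m * I := by
    simpa [hcard] using sum_relEntropy_average (ρ := σ) (by simpa [hcard] using hbar.1.1)
  have hI : 0 ≤ I := by
    have h := Finset.sum_nonneg fun x (_ : x ∈ Finset.univ) => relEntropy_nonneg (hσ x) hbar (hle x)
    rw [hsum] at h
    exact nonneg_of_mul_nonneg_right h (by positivity)
  calc ((2 : ℝ) ^ m)⁻¹ * ∑ x, traceNorm (σbar - σ x)
      ≤ √(((2 : ℝ) ^ m)⁻¹ * ∑ x, 4 * Real.log 2 * relEntropy (σ x) σbar) := by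
        simpa [hcard] using inv_card_mul_sum_le_sqrt fun x =>
          traceNorm_sub_sq_le_relEntropy (hσ x) hbar (hle x)
    _ = √(4 * Real.log 2 * I) := by
        rw [← Finset.mul_sum, hsum]
        field_simp
    _ ≤ √(4 * I) := Real.sqrt_le_sqrt (by nlinarith [Real.log_two_lt_d9])
    _ = 2 * √I := by
        rw [Real.sqrt_mul (by norm_num), show (4 : ℝ) = 2 ^ 2 by norm_num,
          Real.sqrt_sq (by norm_num)]

/-- **Average encoding theorem.** If a quantum encoding of uniformly random `m`-bit
strings carries mutual information `I` about the string, then the average trace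
distance of an encoded state from the average encoded state is at most `2√I`. -/
theorem average_encoding (m d : ℕ) (hm : 0 < m) (hd : 0 < d)
    (σ : (Fin m → Bool) → Matrix (Fin d) (Fin d) ℂ)
    (hσ : ∀ x, IsDensityMatrix (σ x)) :
    ((2 : ℝ) ^ m)⁻¹ * ∑ x : Fin m → Bool,
        traceNorm ((((2 : ℂ) ^ m)⁻¹ • ∑ y : Fin m → Bool, σ y) - σ x) ≤
      2 * Real.sqrt
        (vnEntropy (((2 : ℂ) ^ m)⁻¹ • ∑ y : Fin m → Bool, σ y) -
          ((2 : ℝ) ^ m)⁻¹ * ∑ x : Fin m → Bool, vnEntropy (σ x)) :=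
  average_encoding_general m d σ hσ
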